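/- arXiv:1908.02266 — 3 statements merged into one kernel-verified Lean document; each statement's English description precedes it below -/
import Mathlib

section
/- Let c = (3 - √5)/2. For all real numbers θ₊ ≤ 0, θ₋ ≥ 0 (not both zero) one has -(θ₊ + θ₋)²/(2 - c) + θ₊² + θ₋² - c(θ₊ - θ₋)² ≥ 0. -/
/-! Since `c² = 3c - 1`, i.e. `c (2 - c) = 1 - c`, multiplying the quadratic form by `2 - c`
makes its diagonal terms cancel and leaves `-2c θ₊θ₋`. For `c = (3 - √5)/2 = 1 + ψ` one has
`0 < c < 2`, so this is nonnegative when `θ₊ ≤ 0 ≤ θ₋`. -/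

open Real goldenRatio

lemma three_sub_sqrt_five_div_two_eq_one_add_goldenConj : (3 - √5) / 2 = 1 + ψ := by
  rw [goldenConj]; ring

lemma one_add_goldenConj_sq_sub : (1 + ψ) ^ 2 - 3 * (1 + ψ) + 1 = 0 := by
  linear_combination goldenConj_sq

lemma div_form_eq_of_sq_sub_three_mul_add_one_eq_zero {c : ℝ} (hc : c ^ 2 - 3 * c + 1 = 0)
    (x y : ℝ) :
    -(x + y) ^ 2 / (2 - c) + x ^ 2 + y ^ 2 - c * (x - y) ^ 2 = -2 * c * x * y / (2 - c) := by
  have h2c : 2 - c ≠ 0 := fun h => by nlinarith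
  field_simp
  linear_combination (x - y) ^ 2 * hc

theorem stmt_1 (c : ℝ) (hc : c = (3 - Real.sqrt 5) / 2) :
    ∀ θp θm : ℝ, θp ≤ 0 → 0 ≤ θm → ¬(θp = 0 ∧ θm = 0) →
      -(θp + θm) ^ 2 / (2 - c) + θp ^ 2 + θm ^ 2 - c * (θp - θm) ^ 2 ≥ 0 := by
  intro θp θm hp hm _
  rw [hc, three_sub_sqrt_five_div_two_eq_one_add_goldenConj,
    div_form_eq_of_sq_sub_three_mul_add_one_eq_zero one_add_goldenConj_sq_sub]
  have hc_pos : 0 < 1 + ψ := by linarith [neg_one_lt_goldenConj]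
  have hc_lt_two : 1 + ψ < 2 := by linarith [goldenConj_neg]
  apply div_nonneg _ (sub_nonneg.mpr hc_lt_two.le)
  nlinarith [mul_nonpos_of_nonpos_of_nonneg hp hm]
end

section
/- Let c = (3 - √5)/2. For all real T, θ₊ ≤ 0, θ₋ ≥ 0, one has (2 - c)T² - 2|T|·|θ₊ + θ₋| + θ₊² + θ₋² - c(θ₊ - θ₋)² ≥ 0. -/
/-!
Write `a = |T|` and `s = |θ₊ + θ₋|`. Completing the square in `a` shows the expression is
nonnegative as soon as `s² ≤ (2 - c)(θ₊² + θ₋² - c(θ₊ - θ₋)²)`, i.e. at the minimum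
`a = s / (2 - c)`. Since `c² - 3c + 1 = 0`, one has `c(2 - c) = 1 - c`, and the difference of the
two sides collapses to `-2cθ₊θ₋`, which is nonnegative because `θ₊ ≤ 0 ≤ θ₋`.
-/

theorem quadratic_nonneg_of_sq_le_mul {k a s q : ℝ} (hk : 0 < k) (hs : s ^ 2 ≤ k * q) :
    0 ≤ k * a ^ 2 - 2 * a * s + q := by
  have hsq : k * (k * a ^ 2 - 2 * a * s + q) = (k * a - s) ^ 2 + (k * q - s ^ 2) := by ring
  have : 0 ≤ k * (k * a ^ 2 - 2 * a * s + q) := by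
    rw [hsq]; exact add_nonneg (sq_nonneg _) (by linarith)
  exact nonneg_of_mul_nonneg_right (by linarith) hk

theorem three_sub_sqrt_five_div_two_sq_sub_three_mul_add_one {c : ℝ}
    (hc : c = (3 - Real.sqrt 5) / 2) : c ^ 2 - 3 * c + 1 = 0 := by
  have h5 : Real.sqrt 5 ^ 2 = 5 := Real.sq_sqrt (by norm_num)
  subst hc
  linear_combination h5 / 4

theorem three_sub_sqrt_five_div_two_pos {c : ℝ} (hc : c = (3 - Real.sqrt 5) / 2) : 0 < c := by
  have h : Real.sqrt 5 < 3 := by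
    rw [Real.sqrt_lt' (by norm_num)]; norm_num
  rw [hc]; linarith

theorem three_sub_sqrt_five_div_two_lt_two {c : ℝ} (hc : c = (3 - Real.sqrt 5) / 2) : c < 2 := by
  have h : 0 ≤ Real.sqrt 5 := Real.sqrt_nonneg 5
  rw [hc]; linarith

theorem sq_add_le_of_sq_sub_three_mul_add_one {c p m : ℝ} (hc : c ^ 2 - 3 * c + 1 = 0)
    (hc0 : 0 ≤ c) (hpm : p * m ≤ 0) :
    (p + m) ^ 2 ≤ (2 - c) * (p ^ 2 + m ^ 2 - c * (p - m) ^ 2) := by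
  have hdiff :
      (2 - c) * (p ^ 2 + m ^ 2 - c * (p - m) ^ 2) - (p + m) ^ 2 = -2 * c * (p * m) := by
    linear_combination (p - m) ^ 2 * hc
  linarith [mul_nonneg hc0 (neg_nonneg.mpr hpm)]

theorem stmt_2 (c : ℝ) (hc : c = (3 - Real.sqrt 5) / 2) :
    ∀ T θp θm : ℝ, θp ≤ 0 → 0 ≤ θm →
      (2 - c) * T ^ 2 - 2 * |T| * |θp + θm| + θp ^ 2 + θm ^ 2 - c * (θp - θm) ^ 2 ≥ 0 := by
  intro T θp θm hp hm
  have hbound : |θp + θm| ^ 2 ≤ (2 - c) * (θp ^ 2 + θm ^ 2 - c * (θp - θm) ^ 2) := by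
    rw [sq_abs]
    exact sq_add_le_of_sq_sub_three_mul_add_one
      (three_sub_sqrt_five_div_two_sq_sub_three_mul_add_one hc)
      (three_sub_sqrt_five_div_two_pos hc).le (mul_nonpos_of_nonpos_of_nonneg hp hm)
  have hk : 0 < 2 - c := sub_pos.mpr (three_sub_sqrt_five_div_two_lt_two hc)
  have hquad := quadratic_nonneg_of_sq_le_mul (a := |T|) hk hbound
  rw [sq_abs] at hquad
  linarith
end

section
/- If for a Schrödinger operator L = -d²/dx² - t²V(x) on (a, ∞) with Dirichlet condition at a the quadratic form Q(u) = ∫_a^∞ (u'² - t²Vu²) dx is nonnegative on all Lipschitz test functions vanishing at a and eventually zero, and if lim sup_{x→∞} x·∫_x^∞ V(s) ds = A ∈ (0, ∞) with V ≥ 0 integrable, then t² A ≤ 1. -/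
/-!
Test the quadratic form on the trapezoid `u = tent a b c d`, which rises linearly from `0`
at `a` to `1` at `b`, equals `1` on `[b, c]` and falls linearly to `0` at `d`. Since
`∫ u'² = (b - a)⁻¹ + (d - c)⁻¹` and `u = 1` on `[b, c]`, nonnegativity of the form gives
`t² ∫_b^c V ≤ (b - a)⁻¹ + (d - c)⁻¹`. Letting `c, d → ∞` yields
`t² b ∫_b^∞ V ≤ b / (b - a)`, and letting `b → ∞` along points where `b ∫_b^∞ V`
approaches its lim sup `A` gives `t² A ≤ 1`.
-/

open MeasureTheory Filter Set Topology

noncomputable def tent (a b c d x : ℝ) : ℝ :=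
  max 0 (min (min ((x - a) / (b - a)) 1) ((d - x) / (d - c)))

namespace tent

variable {a b c d x : ℝ}

@[simp]
lemma apply_left : tent a b c d a = 0 := by
  simp [tent]

lemma nonneg : 0 ≤ tent a b c d x := le_max_left _ _

lemma le_one : tent a b c d x ≤ 1 :=
  max_le zero_le_one ((min_le_left _ _).trans (min_le_right _ _))

lemma eq_zero_of_le (hcd : c ≤ d) (hx : d ≤ x) : tent a b c d x = 0 :=
  max_eq_left <| (min_le_right _ _).trans <|
    div_nonpos_of_nonpos_of_nonneg (sub_nonpos.2 hx) (sub_nonneg.2 hcd)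

lemma eq_one (hab : a < b) (hcd : c < d) (hx : x ∈ Icc b c) : tent a b c d x = 1 := by
  have hl : 1 ≤ (x - a) / (b - a) := by
    rw [one_le_div (sub_pos.2 hab)]; linarith [hx.1]
  have hr : 1 ≤ (d - x) / (d - c) := by
    rw [one_le_div (sub_pos.2 hcd)]; linarith [hx.2]
  rw [tent, min_eq_right hl, min_eq_left hr, max_eq_right zero_le_one]

lemma eq_left (hab : a < b) (hbc : b ≤ c) (hcd : c < d) (hx : x ∈ Ioo a b) :
    tent a b c d x = (x - a) / (b - a) := by
  have hl : (x - a) / (b - a) < 1 := by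
    rw [div_lt_one (sub_pos.2 hab)]; linarith [hx.2]
  have hr : 1 ≤ (d - x) / (d - c) := by
    rw [one_le_div (sub_pos.2 hcd)]; linarith [hx.2]
  rw [tent, min_eq_left hl.le, min_eq_left (hl.le.trans hr),
    max_eq_right (div_nonneg (sub_nonneg.2 hx.1.le) (sub_pos.2 hab).le)]

lemma eq_right (hab : a < b) (hbc : b ≤ c) (hcd : c < d) (hx : x ∈ Ioo c d) :
    tent a b c d x = (d - x) / (d - c) := by
  have hl : 1 ≤ (x - a) / (b - a) := by
    rw [one_le_div (sub_pos.2 hab)]; linarith [hx.1]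
  have hr : (d - x) / (d - c) < 1 := by
    rw [div_lt_one (sub_pos.2 hcd)]; linarith [hx.1]
  rw [tent, min_eq_right hl, min_eq_right hr.le,
    max_eq_right (div_nonneg (sub_nonneg.2 hx.2.le) (sub_pos.2 hcd).le)]

lemma exists_lipschitzWith : ∃ K, LipschitzWith K (tent a b c d) := by
  have affine : ∀ m k : ℝ, LipschitzWith ‖m‖₊ fun x : ℝ => m * x + k := fun m k =>
    LipschitzWith.of_dist_le_mul fun x y => by
      simp [Real.dist_eq, ← mul_sub, abs_mul]
  have hl : (fun x => (x - a) / (b - a)) = fun x => (b - a)⁻¹ * x + -(a / (b - a)) := by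
    ext x; ring
  have hr : (fun x => (d - x) / (d - c)) = fun x => -(d - c)⁻¹ * x + d / (d - c) := by
    ext x; ring
  exact ⟨_, (LipschitzWith.const 0).max
    (((hl ▸ affine _ _).min (LipschitzWith.const 1)).min (hr ▸ affine _ _))⟩

lemma deriv_eq_left (hab : a < b) (hbc : b ≤ c) (hcd : c < d) (hx : x ∈ Ioo a b) :
    deriv (tent a b c d) x = (b - a)⁻¹ := by
  rw [((eventuallyEq_of_mem (isOpen_Ioo.mem_nhds hx)) fun y hy =>
    eq_left hab hbc hcd hy).deriv_eq]
  simp [div_eq_mul_inv]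

lemma deriv_eq_zero_of_mem_Ioo (hab : a < b) (hcd : c < d) (hx : x ∈ Ioo b c) :
    deriv (tent a b c d) x = 0 := by
  rw [((eventuallyEq_of_mem (isOpen_Ioo.mem_nhds hx)) fun y hy =>
    eq_one hab hcd (Ioo_subset_Icc_self hy)).deriv_eq, deriv_const]

lemma deriv_eq_right (hab : a < b) (hbc : b ≤ c) (hcd : c < d) (hx : x ∈ Ioo c d) :
    deriv (tent a b c d) x = -(d - c)⁻¹ := by
  rw [((eventuallyEq_of_mem (isOpen_Ioo.mem_nhds hx)) fun y hy =>
    eq_right hab hbc hcd hy).deriv_eq]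
  simp [div_eq_mul_inv]

lemma deriv_eq_zero_of_mem_Ioi (hcd : c ≤ d) (hx : x ∈ Ioi d) :
    deriv (tent a b c d) x = 0 := by
  rw [((eventuallyEq_of_mem (isOpen_Ioi.mem_nhds hx)) fun y hy =>
    eq_zero_of_le hcd (le_of_lt hy)).deriv_eq, deriv_const]

lemma integrableOn_deriv_sq_and_integral_eq (hab : a < b) (hbc : b ≤ c) (hcd : c < d) :
    IntegrableOn (fun x => deriv (tent a b c d) x ^ 2) (Ioi a) ∧
      ∫ x in Ioi a, deriv (tent a b c d) x ^ 2 = (b - a)⁻¹ + (d - c)⁻¹ := by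
  set f := fun x => deriv (tent a b c d) x ^ 2
  have piece : ∀ {u v C : ℝ}, u ≤ v → EqOn f (fun _ => C) (Ioo u v) →
      IntervalIntegrable f volume u v ∧ ∫ x in u..v, f x = (v - u) * C := fun huv h =>
    ⟨intervalIntegrable_const.congr_uIoo (by rw [uIoo_of_le huv]; exact h.symm),
      by rw [intervalIntegral.integral_congr_Ioo_of_le huv h, intervalIntegral.integral_const,
        smul_eq_mul]⟩
  obtain ⟨hi₁, he₁⟩ := piece (C := (b - a)⁻¹ ^ 2) hab.le fun x hx => by
    simp only [f, deriv_eq_left hab hbc hcd hx]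
  obtain ⟨hi₂, he₂⟩ := piece (C := 0) hbc fun x hx => by
    simp only [f, deriv_eq_zero_of_mem_Ioo hab hcd hx]; norm_num
  obtain ⟨hi₃, he₃⟩ := piece (C := (d - c)⁻¹ ^ 2) hcd.le fun x hx => by
    simp only [f, deriv_eq_right hab hbc hcd hx, neg_sq]
  have hfar : EqOn f 0 (Ioi d) := fun x hx => by
    simp [f, deriv_eq_zero_of_mem_Ioi hcd.le hx]
  have hi₄ : IntegrableOn f (Ioi d) := integrableOn_zero.congr_fun hfar.symm measurableSet_Ioi
  have hi : IntervalIntegrable f volume a d := (hi₁.trans hi₂).trans hi₃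
  refine ⟨?_, ?_⟩
  · have had : a ≤ d := by linarith
    rw [← Ioc_union_Ioi_eq_Ioi had]
    exact ((intervalIntegrable_iff_integrableOn_Ioc_of_le had).1 hi).union hi₄
  · rw [← intervalIntegral.integral_interval_add_Ioi' hi hi₄,
      setIntegral_congr_fun measurableSet_Ioi hfar,
      ← intervalIntegral.integral_add_adjacent_intervals (hi₁.trans hi₂) hi₃,
      ← intervalIntegral.integral_add_adjacent_intervals hi₁ hi₂, he₁, he₂, he₃]
    simp only [inv_pow, mul_zero, add_zero, Pi.zero_apply, integral_zero]
    field_simp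

end tent

lemma tendsto_div_sub_atTop (a : ℝ) : Tendsto (fun x : ℝ => x / (x - a)) atTop (𝓝 1) := by
  have h : Tendsto (fun x => 1 + a * (x - a)⁻¹) atTop (𝓝 (1 + a * 0)) :=
    tendsto_const_nhds.add <| tendsto_const_nhds.mul <|
      tendsto_inv_atTop_zero.comp <| tendsto_atTop_add_const_right _ _ tendsto_id
  rw [mul_zero, add_zero] at h
  refine h.congr' ?_
  filter_upwards [eventually_gt_atTop a] with x hx
  field_simp [sub_ne_zero.2 hx.ne']
  ring

section Schrodinger

variable {a t : ℝ} {V : ℝ → ℝ}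

lemma sq_mul_intervalIntegral_le_of_tent (hV : ∀ x, 0 ≤ V x) (hVint : IntegrableOn V (Ioi a))
    {b c d : ℝ} (hab : a < b) (hbc : b ≤ c) (hcd : c < d)
    (hQ : 0 ≤ ∫ x in Ioi a, (deriv (tent a b c d) x ^ 2 - t ^ 2 * V x * tent a b c d x ^ 2)) :
    t ^ 2 * ∫ x in b..c, V x ≤ (b - a)⁻¹ + (d - c)⁻¹ := by
  set u := tent a b c d
  obtain ⟨hderiv_int, hderiv⟩ := tent.integrableOn_deriv_sq_and_integral_eq hab hbc hcd
  obtain ⟨K, hK⟩ := tent.exists_lipschitzWith (a := a) (b := b) (c := c) (d := d)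
  have hVu_int : IntegrableOn (fun x => V x * u x ^ 2) (Ioi a) :=
    hVint.mul_bdd (hK.continuous.pow 2).aestronglyMeasurable (c := 1) <|
      Eventually.of_forall fun x => by
        rw [Real.norm_eq_abs, abs_pow, sq_abs]
        exact pow_le_one₀ tent.nonneg tent.le_one
  have hVu : ∫ x in b..c, V x ≤ ∫ x in Ioi a, V x * u x ^ 2 := by
    rw [intervalIntegral.integral_of_le hbc]
    calc ∫ x in Ioc b c, V x = ∫ x in Ioc b c, V x * u x ^ 2 :=
          setIntegral_congr_fun measurableSet_Ioc fun x hx => by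
            simp [u, tent.eq_one hab hcd (Ioc_subset_Icc_self hx)]
      _ ≤ ∫ x in Ioi a, V x * u x ^ 2 :=
          setIntegral_mono_set hVu_int
            (Eventually.of_forall fun x => mul_nonneg (hV x) (sq_nonneg _))
            (Ioc_subset_Ioi_self.trans (Ioi_subset_Ioi hab.le)).eventuallyLE
  have hQ' : t ^ 2 * ∫ x in Ioi a, V x * u x ^ 2 ≤ ∫ x in Ioi a, deriv u x ^ 2 := by
    rw [integral_sub hderiv_int (by simpa only [mul_assoc] using hVu_int.const_mul (t ^ 2))]
      at hQ
    simp only [mul_assoc, integral_const_mul] at hQ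
    linarith
  calc t ^ 2 * ∫ x in b..c, V x ≤ t ^ 2 * ∫ x in Ioi a, V x * u x ^ 2 := by gcongr
    _ ≤ (b - a)⁻¹ + (d - c)⁻¹ := hderiv ▸ hQ'

lemma sq_mul_integral_Ioi_le (hV : ∀ x, 0 ≤ V x) (hVint : IntegrableOn V (Ioi a))
    (hQ : ∀ u : ℝ → ℝ, (∃ K, LipschitzWith K u) → u a = 0 → (∃ R, ∀ x ≥ R, u x = 0) →
      0 ≤ ∫ x in Ioi a, (deriv u x ^ 2 - t ^ 2 * V x * u x ^ 2))
    {b : ℝ} (hab : a < b) :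
    t ^ 2 * ∫ x in Ioi b, V x ≤ (b - a)⁻¹ := by
  have hlhs :
      Tendsto (fun c => t ^ 2 * ∫ x in b..c, V x) atTop (𝓝 (t ^ 2 * ∫ x in Ioi b, V x)) :=
    (intervalIntegral_tendsto_integral_Ioi b (hVint.mono_set (Ioi_subset_Ioi hab.le))
      tendsto_id).const_mul _
  have hrhs : Tendsto (fun c => (b - a)⁻¹ + (c - b)⁻¹) atTop (𝓝 ((b - a)⁻¹ + 0)) :=
    tendsto_const_nhds.add <| tendsto_inv_atTop_zero.comp <|
      tendsto_atTop_add_const_right _ _ tendsto_id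
  rw [add_zero] at hrhs
  refine le_of_tendsto_of_tendsto hlhs hrhs ?_
  filter_upwards [eventually_gt_atTop b] with c hbc
  -- a descending ramp as long as the plateau costs `(c - b)⁻¹`, which vanishes as `c → ∞`
  have hcd : c < 2 * c - b := by linarith
  have := sq_mul_intervalIntegral_le_of_tent hV hVint hab hbc.le hcd
    (hQ _ tent.exists_lipschitzWith tent.apply_left
      ⟨_, fun x hx => tent.eq_zero_of_le hcd.le hx⟩)
  rwa [show 2 * c - b - c = c - b by ring] at this

end Schrodinger

theorem stmt_18_general (a t A : ℝ) (V : ℝ → ℝ) (hV : ∀ x, 0 ≤ V x)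
    (hVint : IntegrableOn V (Set.Ioi a))
    (hA : limsup (fun x : ℝ => x * ∫ s in Set.Ioi x, V s) atTop = A)
    (hQ : ∀ u : ℝ → ℝ, (∃ K, LipschitzWith K u) → u a = 0 →
      (∃ R, ∀ x ≥ R, u x = 0) →
      0 ≤ ∫ x in Set.Ioi a, (deriv u x ^ 2 - t ^ 2 * V x * u x ^ 2)) :
    t ^ 2 * A ≤ 1 := by
  set T := fun x : ℝ => x * ∫ s in Ioi x, V s
  have hbound : ∀ᶠ x in atTop, t ^ 2 * T x ≤ x / (x - a) := by
    filter_upwards [eventually_gt_atTop (max a 0)] with x hx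
    have hax : a < x := (le_max_left _ _).trans_lt hx
    calc t ^ 2 * T x = x * (t ^ 2 * ∫ s in Ioi x, V s) := by ring
      _ ≤ x * (x - a)⁻¹ := by
          gcongr
          · exact (le_max_right _ _).trans hx.le
          · exact sq_mul_integral_Ioi_le hV hVint hQ hax
      _ = x / (x - a) := (div_eq_mul_inv _ _).symm
  have hcobdd : IsCoboundedUnder (· ≤ ·) atTop T :=
    isCoboundedUnder_le_of_eventually_le atTop <| (eventually_ge_atTop 0).mono fun x hx =>
      mul_nonneg hx (setIntegral_nonneg measurableSet_Ioi fun s _ => hV s)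
  have hbelow : ∀ B < A, t ^ 2 * B ≤ 1 := fun B hB =>
    ge_of_tendsto_of_frequently (tendsto_div_sub_atTop a) <|
      ((frequently_lt_of_lt_limsup hcobdd (hA ▸ hB)).and_eventually hbound).mono
        fun x ⟨hBx, hx⟩ => (mul_le_mul_of_nonneg_left hBx.le (sq_nonneg t)).trans hx
  exact le_of_tendsto ((continuous_const_mul _).tendsto A |>.mono_left nhdsWithin_le_nhds)
    (eventually_nhdsWithin_of_forall (s := Iio A) hbelow)

theorem stmt_18 (a t A : ℝ) (V : ℝ → ℝ) (hV : ∀ x, 0 ≤ V x)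
    (hVint : IntegrableOn V (Set.Ioi a))
    (hA : limsup (fun x : ℝ => x * ∫ s in Set.Ioi x, V s) atTop = A)
    (hApos : 0 < A)
    (hQ : ∀ u : ℝ → ℝ, (∃ K, LipschitzWith K u) → u a = 0 →
      (∃ R, ∀ x ≥ R, u x = 0) →
      0 ≤ ∫ x in Set.Ioi a, (deriv u x ^ 2 - t ^ 2 * V x * u x ^ 2)) :
    t ^ 2 * A ≤ 1 :=
  stmt_18_general a t A V hV hVint hA hQ
end
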